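/- arXiv:2207.02821 — 8 statements merged into one kernel-verified Lean document; each statement's English description precedes it below -/
import Mathlib

section
/- For every integer p ≥ 3, every q ∈ [(p-2)/p, 1] and every r ∈ [0,1], it holds that ((1 + r(1-q)/q)^(p-1) - 1) / ((p-1) r (1-q)/q) ≤ 1/(1-r). (For r = 0 interpret the left side as its limit, which equals 1.) -/
/-!
With `x = r (1 - q) / q` and `n = p - 2`, the left side is `((1 + x)^(n+1) - 1) / ((n + 1) x)`.
By induction on `n`, `(1 + x)^(n+1) - 1 ≤ (n + 1) x / (1 - n x / 2)` as long as `n x < 2`.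
The lower bound on `q` says exactly `n (1 - q) ≤ 2 q`, i.e. `n x ≤ 2 r`, so `1 - n x / 2 ≥ 1 - r`.
-/

lemma one_add_pow_sub_one_mul_two_sub_le {x : ℝ} (hx : 0 ≤ x) (n : ℕ) (h : n * x < 2) :
    ((1 + x) ^ (n + 1) - 1) * (2 - n * x) ≤ 2 * (n + 1) * x := by
  induction n with
  | zero => simp [mul_comm]
  | succ n ih =>
    push_cast at h ⊢
    have hnx : 0 < 2 - n * x := by nlinarith
    have ih := ih (by linarith)
    set a := (1 + x) ^ (n + 1) - 1 with ha
    have hstep : (1 + x) ^ (n + 1 + 1) - 1 = (1 + x) * a + x := by rw [ha]; ring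
    rw [hstep]
    -- multiply through by `2 - n x` to use the induction hypothesis; the slack is a cubic in `x`
    refine le_of_mul_le_mul_right ?_ hnx
    have hcubic : 0 ≤ x ^ 3 * (n + 1) * (n + 2) := by positivity
    nlinarith [mul_le_mul_of_nonneg_left ih
      (mul_nonneg (by linarith : (0 : ℝ) ≤ 1 + x) (by linarith : (0 : ℝ) ≤ 2 - (n + 1) * x))]

theorem stmt_0 (p : ℕ) (hp : 3 ≤ p) (q r : ℝ)
    (hq0 : 0 < q) (hql : ((p : ℝ) - 2) / p ≤ q) (hqu : q ≤ 1)
    (hr0 : 0 < r) (hr1 : r < 1) :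
    ((1 + r * (1 - q) / q) ^ (p - 1) - 1) / (((p : ℝ) - 1) * r * (1 - q) / q)
      ≤ 1 / (1 - r) := by
  obtain ⟨n, rfl⟩ : ∃ n, p = n + 2 := ⟨p - 2, by omega⟩
  rw [show n + 2 - 1 = n + 1 by omega]
  push_cast at hql ⊢
  set x := r * (1 - q) / q with hx
  have hx0 : 0 ≤ x := div_nonneg (mul_nonneg hr0.le (by linarith)) hq0.le
  have hnq : n * (1 - q) ≤ 2 * q := by
    rw [add_sub_cancel_right, div_le_iff₀ (by positivity)] at hql; linarith
  have hnx : n * x ≤ 2 * r := by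
    rw [hx, mul_div_assoc', div_le_iff₀ hq0]; nlinarith
  have hpow := one_add_pow_sub_one_mul_two_sub_le hx0 n (by linarith)
  have hpow0 : 0 ≤ (1 + x) ^ (n + 1) - 1 := by
    linarith [one_le_pow₀ (n := n + 1) (by linarith : (1 : ℝ) ≤ 1 + x)]
  rw [show ((n : ℝ) + 2 - 1) * r * (1 - q) / q = (n + 1) * x by rw [hx]; ring]
  have h1r : 0 < 1 - r := by linarith
  apply div_le_of_le_mul₀ (by positivity) (by positivity)
  rw [one_div_mul_eq_div, le_div_iff₀ h1r]
  nlinarith [mul_le_mul_of_nonneg_left (by linarith : 2 * (1 - r) ≤ 2 - n * x) hpow0]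
end

section
/- Let p ≥ 3 be an integer and β ≥ 0. Define A(0,β) = sup_{r ∈ (0,1)} ( β² · p r^{p-1} / r − 1/(1−r) ). Then A(0,β) ≤ 0 if and only if β ≤ β_d, where β_d = sqrt( (p−1)^{p−1} / ( p (p−2)^{p−2} ) ). -/
/-!
With `m = p - 2`, the condition at `r` is `β² p r^m (1 - r) ≤ 1`. Bernoulli's inequality shows
that `r^m (1 - r)` is maximal at `r = m / (m + 1)`, with value `m^m / (m + 1)^(m + 1)`, so the
condition holds on all of `(0, 1)` iff `β² ≤ (m + 1)^(m + 1) / (p m^m) = β_d²`.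
-/

open Set

theorem pow_mul_one_sub_le {m : ℕ} (hm : 0 < m) {r : ℝ} (hr : 0 < r) :
    r ^ m * (1 - r) ≤ (m : ℝ) ^ m / ((m : ℝ) + 1) ^ (m + 1) := by
  have hm' : (0 : ℝ) < m := by exact_mod_cast hm
  -- Bernoulli at `t = m / ((m + 1) r)`, scaled by `((m + 1) r) ^ (m + 1)`
  have h := one_add_mul_sub_le_pow (a := (m : ℝ) / ((m + 1) * r))
    (by linarith [show 0 ≤ (m : ℝ) / ((m + 1) * r) by positivity]) (m + 1)
  rw [div_pow, mul_pow, le_div_iff₀ (by positivity)] at h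
  rw [le_div_iff₀ (by positivity)]
  have e : (1 + ((m + 1 : ℕ) : ℝ) * ((m : ℝ) / ((m + 1) * r) - 1)) *
      (((m : ℝ) + 1) ^ (m + 1) * r ^ (m + 1)) =
        m * (r ^ m * (1 - r) * ((m : ℝ) + 1) ^ (m + 1)) := by
    field_simp
    push_cast
    ring
  rw [e, pow_succ (m : ℝ)] at h
  nlinarith

theorem pow_mul_one_sub_at_max (m : ℕ) :
    ((m : ℝ) / (m + 1)) ^ m * (1 - m / (m + 1)) = (m : ℝ) ^ m / ((m : ℝ) + 1) ^ (m + 1) := by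
  have : (m : ℝ) + 1 ≠ 0 := by positivity
  rw [div_pow]
  field_simp
  ring

theorem div_add_one_mem_Ioo {m : ℕ} (hm : 0 < m) : (m : ℝ) / (m + 1) ∈ Ioo 0 1 := by
  have hm' : (0 : ℝ) < m := by exact_mod_cast hm
  exact ⟨by positivity, (div_lt_one (by positivity)).2 (by linarith)⟩

theorem mul_pow_succ_div_sub_one_div_one_sub_nonpos_iff {r : ℝ} (hr : r ∈ Ioo 0 1) (c : ℝ)
    (n : ℕ) :
    c * r ^ (n + 1) / r - 1 / (1 - r) ≤ 0 ↔ c * (r ^ n * (1 - r)) ≤ 1 := by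
  have h1r : 0 < 1 - r := sub_pos.2 hr.2
  rw [sub_nonpos, pow_succ, ← mul_assoc, mul_div_assoc, div_self hr.1.ne', mul_one,
    le_div_iff₀ h1r, mul_assoc]

theorem forall_Ioo_mul_pow_mul_one_sub_le_one_iff {m : ℕ} (hm : 0 < m) {c : ℝ} (hc : 0 ≤ c) :
    (∀ r ∈ Ioo (0 : ℝ) 1, c * (r ^ m * (1 - r)) ≤ 1) ↔
      c * ((m : ℝ) ^ m / ((m : ℝ) + 1) ^ (m + 1)) ≤ 1 := by
  refine ⟨fun h => ?_, fun h r hr => ?_⟩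
  · simpa only [pow_mul_one_sub_at_max] using h _ (div_add_one_mem_Ioo hm)
  · exact (mul_le_mul_of_nonneg_left (pow_mul_one_sub_le hm hr.1) hc).trans h

theorem stmt_1 (p : ℕ) (hp : 3 ≤ p) (β : ℝ) (hβ : 0 ≤ β) :
    (∀ r ∈ Set.Ioo (0 : ℝ) 1,
        β ^ 2 * ((p : ℝ) * r ^ (p - 1)) / r - 1 / (1 - r) ≤ 0)
      ↔ β ≤ Real.sqrt (((p : ℝ) - 1) ^ (p - 1) / ((p : ℝ) * ((p : ℝ) - 2) ^ (p - 2))) := by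
  obtain ⟨m, rfl⟩ : ∃ m, p = m + 2 := ⟨p - 2, by omega⟩
  have hm : 0 < m := by omega
  have hp1 : ((m + 2 : ℕ) : ℝ) - 1 = m + 1 := by push_cast; ring
  have hp2 : ((m + 2 : ℕ) : ℝ) - 2 = m := by push_cast; ring
  rw [show m + 2 - 1 = m + 1 by omega, show m + 2 - 2 = m by omega, hp1, hp2,
    Real.le_sqrt hβ (by positivity)]
  calc (∀ r ∈ Ioo (0 : ℝ) 1,
        β ^ 2 * (((m + 2 : ℕ) : ℝ) * r ^ (m + 1)) / r - 1 / (1 - r) ≤ 0)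
      ↔ ∀ r ∈ Ioo (0 : ℝ) 1, β ^ 2 * ((m + 2 : ℕ) : ℝ) * (r ^ m * (1 - r)) ≤ 1 :=
        forall₂_congr fun r hr => by
          rw [← mul_assoc, mul_pow_succ_div_sub_one_div_one_sub_nonpos_iff hr]
    _ ↔ β ^ 2 * ((m + 2 : ℕ) : ℝ) * ((m : ℝ) ^ m / ((m : ℝ) + 1) ^ (m + 1)) ≤ 1 :=
        forall_Ioo_mul_pow_mul_one_sub_le_one_iff hm (by positivity)
    _ ↔ β ^ 2 ≤ ((m : ℝ) + 1) ^ (m + 1) / (((m + 2 : ℕ) : ℝ) * (m : ℝ) ^ m) := by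
        rw [le_div_iff₀ (by positivity), mul_div_assoc', div_le_one (by positivity), mul_assoc]
end

section
/- Let p ≥ 3, β > 0, E ∈ ℝ, and define f(E,q) = β q^{p/2} E + (1/2) log(1−q) + (β²/2)(1 − p(1−q)q^{p−1} − q^p) for q ∈ (0,1). Then for all q ∈ (0,1), ∂_q f(E,q) = (sqrt(2)β₂(q)/(1−q)) · ( E/E_∞ − (1/2)(1/(sqrt(2)β₂(q)) + sqrt(2)β₂(q)) ), where β₂(q) = β sqrt(p(p−1)/2)(1−q)q^{(p−2)/2} and E_∞ = 2 sqrt(p−1)/sqrt(p). -/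
/-!
Differentiate term by term. Writing `b = √2 β₂(q) = β √(p(p-1)) (1-q) q^((p-2)/2)`, the polynomial
part contributes `-β² p (p-1) (1-q) q^(p-2) / 2 = -b² / (2(1-q))`, the logarithm `-1 / (2(1-q))`,
and since `E_∞ = 2√(p(p-1)) / p` the `q^(p/2)` term contributes `b E / ((1-q) E_∞)`.
-/

open Real

lemma Real.sqrt_mul_sub_one_eq_mul_sqrt_div {x : ℝ} (hx : 0 ≤ x) :
    √(x * (x - 1)) = x * √((x - 1) / x) := by
  rcases hx.eq_or_lt with rfl | hx
  · simp
  rw [← sqrt_sq hx.le, ← sqrt_mul (sq_nonneg x), sqrt_sq hx.le]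
  congr 1
  field_simp

lemma Real.rpow_div_two_sq {x : ℝ} (hx : 0 ≤ x) (r : ℝ) : (x ^ (r / 2)) ^ 2 = x ^ r := by
  rw [← rpow_natCast, ← rpow_mul hx]
  norm_num

lemma hasDerivAt_one_sub_mul_mul_pow_sub_one_sub_pow (n : ℕ) (hn : 1 ≤ n) (q : ℝ) :
    HasDerivAt (fun x : ℝ => 1 - n * (1 - x) * x ^ (n - 1) - x ^ n)
      (-(n * (n - 1) * (1 - q) * q ^ (n - 2))) q := by
  have hprod : HasDerivAt (fun x : ℝ => n * (1 - x) * x ^ (n - 1))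
      (n * -1 * q ^ (n - 1) + n * (1 - q) * ((n - 1 : ℕ) * q ^ (n - 1 - 1))) q :=
    (((hasDerivAt_id' q).const_sub 1).const_mul _).mul (hasDerivAt_pow _ _)
  refine ((hprod.const_sub 1).sub (hasDerivAt_pow n q)).congr_deriv ?_
  obtain ⟨m, rfl⟩ := Nat.exists_eq_add_of_le' hn
  rw [show m + 1 - 2 = m - 1 by omega]
  simp only [Nat.add_sub_cancel, Nat.cast_add, Nat.cast_one]
  ring

lemma hasDerivAt_pSpin_f (p : ℕ) (hp : 1 ≤ p) (β E : ℝ) {q : ℝ} (hq0 : 0 < q) (hq1 : q < 1) :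
    HasDerivAt (fun x : ℝ => β * x ^ ((p : ℝ) / 2) * E + (1 / 2) * log (1 - x)
        + β ^ 2 / 2 * (1 - (p : ℝ) * (1 - x) * x ^ (p - 1) - x ^ p))
      (β * E * p / 2 * q ^ (((p : ℝ) - 2) / 2) - 1 / (2 * (1 - q))
        - β ^ 2 / 2 * (p * (p - 1) * (1 - q) * q ^ (p - 2))) q := by
  have hrpow := ((hasDerivAt_rpow_const (p := (p : ℝ) / 2) (Or.inl hq0.ne')).const_mul β).mul_const E
  have hlog := (((hasDerivAt_id' q).const_sub 1).log (sub_ne_zero.2 hq1.ne')).const_mul (1 / 2 : ℝ)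
  have hpoly := (hasDerivAt_one_sub_mul_mul_pow_sub_one_sub_pow p hp q).const_mul (β ^ 2 / 2)
  refine ((hrpow.add hlog).add hpoly).congr_deriv ?_
  rw [show (p : ℝ) / 2 - 1 = ((p : ℝ) - 2) / 2 by ring]
  field_simp
  ring

theorem stmt_8 (p : ℕ) (hp : 3 ≤ p) (β E : ℝ) (hβ : 0 < β)
    (f : ℝ → ℝ)
    (hf : ∀ q, f q = β * q ^ ((p : ℝ) / 2) * E + (1 / 2) * Real.log (1 - q)
        + β ^ 2 / 2 * (1 - (p : ℝ) * (1 - q) * q ^ (p - 1) - q ^ p))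
    (β₂ : ℝ → ℝ)
    (hβ₂ : ∀ q, β₂ q = β * Real.sqrt ((p : ℝ) * ((p : ℝ) - 1) / 2) * (1 - q)
        * q ^ (((p : ℝ) - 2) / 2))
    (Einf : ℝ) (hEinf : Einf = 2 * Real.sqrt (((p : ℝ) - 1) / p)) :
    ∀ q ∈ Set.Ioo (0 : ℝ) 1,
      HasDerivAt f
        (Real.sqrt 2 * β₂ q / (1 - q)
          * (E / Einf - (1 / 2) * (1 / (Real.sqrt 2 * β₂ q) + Real.sqrt 2 * β₂ q))) q := by
  rintro q ⟨hq0, hq1⟩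
  rw [funext hf]
  convert hasDerivAt_pSpin_f p (by omega) β E hq0 hq1 using 1
  have hp' : (3 : ℝ) ≤ p := by exact_mod_cast hp
  have hb : √2 * β₂ q = β * √(p * (p - 1)) * (1 - q) * q ^ (((p : ℝ) - 2) / 2) := by
    have hs : √2 * √(p * (p - 1) / 2 : ℝ) = √(p * (p - 1)) := by
      rw [← sqrt_mul zero_le_two, mul_div_cancel₀ _ two_ne_zero]
    rw [hβ₂, ← hs]
    ring
  have hEinf' : Einf = 2 * √(p * (p - 1)) / p := by
    rw [hEinf, sqrt_mul_sub_one_eq_mul_sqrt_div (by positivity)]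
    field_simp
  rw [hb, hEinf']
  set t := q ^ (((p : ℝ) - 2) / 2)
  set c := √((p : ℝ) * (p - 1))
  have hc : c ^ 2 = p * (p - 1) := sq_sqrt (by nlinarith)
  have hc0 : 0 < c := sqrt_pos.2 (by nlinarith)
  have ht : t ^ 2 = q ^ (p - 2) := by
    rw [rpow_div_two_sq hq0.le, ← Nat.cast_ofNat, ← Nat.cast_sub (by omega), rpow_natCast]
  have ht0 : 0 < t := rpow_pos_of_pos hq0 _
  rw [← ht]
  have : 1 - q ≠ 0 := sub_ne_zero.2 hq1.ne'
  field_simp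
  rw [hc]
  ring
end

section
/- With f, β₂, E_∞ as above, for q ∈ (0,1) the equation ∂_q f(E,q) = 0 holds if and only if E/E_∞ = (1/2)( 1/(sqrt(2)β₂(q)) + sqrt(2)β₂(q) ). -/
/-!
With `A = β (1 - q) q^((p-2)/2)` one finds `2 (1 - q) ∂_q f = p E A - 1 - p (p - 1) A²`.
Since `√2 β₂(q) = √(p (p - 1)) A` and `E_∞ = 2 √(p (p - 1)) / p`, the stationarity condition
becomes `2 (E / E_∞) x = 1 + x²` for `x = √2 β₂(q) > 0`, which is the claimed identity.
-/

open Real Set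

noncomputable def freeEnergy (p : ℕ) (β E q : ℝ) : ℝ :=
  β * q ^ ((p : ℝ) / 2) * E + (1 / 2) * log (1 - q)
    + β ^ 2 / 2 * (1 - (p : ℝ) * (1 - q) * q ^ (p - 1) - q ^ p)

theorem hasDerivAt_one_sub_mul_sub_pow (p : ℕ) (q : ℝ) :
    HasDerivAt (fun x : ℝ => 1 - (p : ℝ) * (1 - x) * x ^ (p - 1) - x ^ p)
      (-((p : ℝ) * ((p : ℝ) - 1) * (1 - q) * q ^ (p - 2))) q := by
  rcases p with _ | _ | k
  · simpa using hasDerivAt_const q (0 : ℝ)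
  · simpa using hasDerivAt_const q (0 : ℝ)
  have h : HasDerivAt (fun x : ℝ => 1 - ((k + 2 : ℕ) : ℝ) * ((1 - x) * x ^ (k + 1)) - x ^ (k + 2))
      _ q :=
    ((hasDerivAt_const q 1).sub ((((hasDerivAt_id q).const_sub 1).mul
      (hasDerivAt_pow (k + 1) q)).const_mul _)).sub (hasDerivAt_pow (k + 2) q)
  simp only [← mul_assoc] at h
  convert h using 1
  · funext x; push_cast; ring
  · rw [show k + 1 + 1 - 2 = k by omega]; simp only [id]; push_cast; ring

theorem rpow_sub_two_div_two_sq {q : ℝ} (hq : 0 ≤ q) {p : ℕ} (hp : 2 ≤ p) :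
    (q ^ (((p : ℝ) - 2) / 2)) ^ 2 = q ^ (p - 2) := by
  rw [← rpow_mul_natCast hq, ← rpow_natCast, Nat.cast_sub hp]
  norm_num

theorem hasDerivAt_freeEnergy {p : ℕ} (hp : 2 ≤ p) (β E : ℝ) {q : ℝ} (hq : q ∈ Ioo 0 1) :
    HasDerivAt (freeEnergy p β E)
      ((p * E * (β * (1 - q) * q ^ (((p : ℝ) - 2) / 2)) - 1
        - p * (p - 1) * (β * (1 - q) * q ^ (((p : ℝ) - 2) / 2)) ^ 2) / (2 * (1 - q))) q := by
  obtain ⟨hq0, hq1⟩ := hq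
  have h1q : 1 - q ≠ 0 := by linarith
  have hlog : HasDerivAt (fun x : ℝ => log (1 - x)) (-1 / (1 - q)) q := by
    simpa using ((hasDerivAt_id q).const_sub 1).log h1q
  have h : HasDerivAt (freeEnergy p β E) _ q :=
    ((((hasDerivAt_rpow_const (p := (p : ℝ) / 2) (Or.inl hq0.ne')).const_mul β).mul_const E).add
      (hlog.const_mul (1 / 2))).add ((hasDerivAt_one_sub_mul_sub_pow p q).const_mul (β ^ 2 / 2))
  convert h using 1
  rw [mul_pow, mul_pow, rpow_sub_two_div_two_sq hq0.le hp,
    show (p : ℝ) / 2 - 1 = ((p : ℝ) - 2) / 2 by ring]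
  field_simp
  ring

theorem sqrt_div_eq_sqrt_mul_div (a : ℝ) {b : ℝ} (hb : 0 ≤ b) : √(a / b) = √(b * a) / b := by
  rcases hb.eq_or_lt with rfl | hb
  · simp
  have hsb : √b ≠ 0 := (sqrt_pos.2 hb).ne'
  rw [sqrt_div' a hb.le, sqrt_mul hb.le]
  field_simp
  rw [sq_sqrt hb.le]

theorem div_eq_half_mul_inv_add_iff {a b x : ℝ} (hb : b ≠ 0) (hx : 0 < x) :
    a / b = 1 / 2 * (1 / x + x) ↔ 2 * a * x = b * (1 + x ^ 2) := by
  rw [div_eq_iff hb]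
  constructor <;> intro h
  · rw [h]; field_simp
  · field_simp; linarith

theorem stmt_9 (p : ℕ) (hp : 3 ≤ p) (β E : ℝ) (hβ : 0 < β)
    (f : ℝ → ℝ)
    (hf : ∀ q, f q = β * q ^ ((p : ℝ) / 2) * E + (1 / 2) * Real.log (1 - q)
        + β ^ 2 / 2 * (1 - (p : ℝ) * (1 - q) * q ^ (p - 1) - q ^ p))
    (β₂ : ℝ → ℝ)
    (hβ₂ : ∀ q, β₂ q = β * Real.sqrt ((p : ℝ) * ((p : ℝ) - 1) / 2) * (1 - q)
        * q ^ (((p : ℝ) - 2) / 2))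
    (Einf : ℝ) (hEinf : Einf = 2 * Real.sqrt (((p : ℝ) - 1) / p))
    (q : ℝ) (hq : q ∈ Set.Ioo (0 : ℝ) 1) :
    deriv f q = 0 ↔
      E / Einf = (1 / 2) * (1 / (Real.sqrt 2 * β₂ q) + Real.sqrt 2 * β₂ q) := by
  have hp' : (2 : ℝ) ≤ p := by exact_mod_cast (by omega : 2 ≤ p)
  have hderiv := (hasDerivAt_freeEnergy (p := p) (by omega) β E hq).deriv
  rw [show freeEnergy p β E = f from funext fun x => (hf x).symm] at hderiv
  set A := β * (1 - q) * q ^ (((p : ℝ) - 2) / 2)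
  set s := √((p : ℝ) * ((p : ℝ) - 1))
  have hA : 0 < A := mul_pos (mul_pos hβ (by linarith [hq.2])) (rpow_pos_of_pos hq.1 _)
  have hs : 0 < s := sqrt_pos.2 (by nlinarith)
  have hs2 : s ^ 2 = p * (p - 1) := sq_sqrt (by nlinarith)
  have hsqrt : √2 * √((p : ℝ) * (p - 1) / 2) = s := by
    rw [← sqrt_mul zero_le_two]; congr 1; ring
  have hβ₂q : √2 * β₂ q = s * A := by rw [hβ₂, ← hsqrt]; ring
  have hEinf' : Einf = 2 * s / p := by
    rw [hEinf, sqrt_div_eq_sqrt_mul_div _ (by linarith)]; ring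
  have hfactor : 2 * E * (s * A) - 2 * s / p * (1 + (s * A) ^ 2)
      = 2 * s / p * (p * E * A - 1 - p * (p - 1) * A ^ 2) := by
    rw [mul_pow, hs2]; field_simp; ring
  rw [hderiv, hEinf', hβ₂q, div_eq_half_mul_inv_add_iff (by positivity) (by positivity),
    div_eq_zero_iff, or_iff_left (by linarith [hq.2]), ← sub_eq_zero (a := 2 * E * (s * A)),
    hfactor, mul_eq_zero, or_iff_right (by positivity)]
end

section
/- If E < E_∞ = 2 sqrt((p−1)/p), then the function q ↦ f(E,q) = β q^{p/2} E + (1/2)log(1−q) + (β²/2)(1 − p(1−q)q^{p−1} − q^p) is strictly decreasing on (0,1) and has no critical points there. -/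
/-!
Writing `X = (1 - q) q^(p/2 - 1) > 0`, the derivative of `f` times `2 (1 - q)` equals
`β p E X - (1 + β² p (p - 1) X²)`. By AM-GM, `1 + β² p (p - 1) X² ≥ 2 β sqrt (p (p - 1)) X = β p E_∞ X`,
which exceeds `β p E X` since `E < E_∞`. Hence `f' < 0` on `(0, 1)`.
-/

open Real

lemma hasDerivAt_one_sub_mul_one_sub_mul_pow_sub_pow (n : ℕ) (q : ℝ) :
    HasDerivAt (fun x : ℝ => 1 - (n : ℝ) * (1 - x) * x ^ (n - 1) - x ^ n)
      (-((n : ℝ) * (n - 1) * (1 - q) * q ^ (n - 2))) q := by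
  rcases n with _ | _ | n
  · simpa using hasDerivAt_const q (0 : ℝ)
  · simpa using hasDerivAt_const q (0 : ℝ)
  · refine ((hasDerivAt_const q 1).sub ((((hasDerivAt_id' q).const_sub 1).const_mul
      ((n + 2 : ℕ) : ℝ)).mul (hasDerivAt_pow (n + 1) q))).sub (hasDerivAt_pow (n + 2) q)
      |>.congr_deriv ?_
    simp only [Nat.add_one_sub_one]
    push_cast
    ring

lemma hasDerivAt_free_energy (p : ℕ) (β E : ℝ) {q : ℝ} (hq0 : 0 < q) (hq1 : q < 1) :
    HasDerivAt (fun x => β * x ^ ((p : ℝ) / 2) * E + (1 / 2) * log (1 - x)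
        + β ^ 2 / 2 * (1 - (p : ℝ) * (1 - x) * x ^ (p - 1) - x ^ p))
      (β * E * ((p : ℝ) / 2) * q ^ ((p : ℝ) / 2 - 1) - 1 / (2 * (1 - q))
        - β ^ 2 / 2 * (p : ℝ) * ((p : ℝ) - 1) * (1 - q) * q ^ (p - 2)) q := by
  have hpow := ((hasDerivAt_rpow_const (p := (p : ℝ) / 2) (Or.inl hq0.ne')).const_mul β).mul_const E
  have hlog := (((hasDerivAt_id' q).const_sub 1).log (by linarith)).const_mul (1 / 2 : ℝ)
  have hpoly := (hasDerivAt_one_sub_mul_one_sub_mul_pow_sub_pow p q).const_mul (β ^ 2 / 2)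
  refine ((hpow.add hlog).add hpoly).congr_deriv ?_
  have : (1 : ℝ) - q ≠ 0 := by linarith
  field_simp
  ring

lemma mul_lt_one_add_mul_sq {b c E X : ℝ} (hb : 0 < b) (hX : 0 < X) (hc : 0 ≤ c)
    (hE : E < 2 * sqrt c) : b * E * X < 1 + b ^ 2 * c * X ^ 2 :=
  calc b * E * X < 2 * (b * sqrt c * X) * 1 := by nlinarith [mul_pos hb hX]
    _ ≤ (b * sqrt c * X) ^ 2 + 1 ^ 2 := two_mul_le_add_sq _ _
    _ = 1 + b ^ 2 * c * X ^ 2 := by rw [mul_pow, mul_pow, sq_sqrt hc]; ring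

lemma free_energy_deriv_neg {p : ℕ} (hp : 2 ≤ p) {β E : ℝ} (hβ : 0 < β)
    (hE : E < 2 * sqrt (((p : ℝ) - 1) / p)) {q : ℝ} (hq0 : 0 < q) (hq1 : q < 1) :
    β * E * ((p : ℝ) / 2) * q ^ ((p : ℝ) / 2 - 1) - 1 / (2 * (1 - q))
      - β ^ 2 / 2 * (p : ℝ) * ((p : ℝ) - 1) * (1 - q) * q ^ (p - 2) < 0 := by
  have hp' : (2 : ℝ) ≤ p := by exact_mod_cast hp
  have h1q : 0 < 1 - q := by linarith
  have hsq : q ^ (p - 2) = (q ^ ((p : ℝ) / 2 - 1)) ^ 2 := by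
    rw [← rpow_natCast, ← rpow_mul_natCast hq0.le, Nat.cast_sub hp]
    ring_nf
  set u := q ^ ((p : ℝ) / 2 - 1)
  have hAMGM := mul_lt_one_add_mul_sq (mul_pos hβ (by linarith : (0 : ℝ) < p))
    (mul_pos h1q (rpow_pos_of_pos hq0 _) : 0 < (1 - q) * u) (div_nonneg (by linarith) (by linarith)) hE
  have hscaled : 2 * (1 - q) * (β * E * ((p : ℝ) / 2) * u - 1 / (2 * (1 - q))
      - β ^ 2 / 2 * (p : ℝ) * ((p : ℝ) - 1) * (1 - q) * u ^ 2)
      = β * p * E * ((1 - q) * u) - (1 + (β * p) ^ 2 * ((p - 1) / p) * ((1 - q) * u) ^ 2) := by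
    field_simp
    ring
  rw [hsq]
  exact neg_of_mul_neg_right (hscaled ▸ sub_neg.mpr hAMGM) (by linarith)

theorem stmt_10 (p : ℕ) (hp : 3 ≤ p) (β E : ℝ) (hβ : 0 < β)
    (Einf : ℝ) (hEinf : Einf = 2 * Real.sqrt (((p : ℝ) - 1) / p))
    (hE : E < Einf)
    (f : ℝ → ℝ)
    (hf : ∀ q, f q = β * q ^ ((p : ℝ) / 2) * E + (1 / 2) * Real.log (1 - q)
        + β ^ 2 / 2 * (1 - (p : ℝ) * (1 - q) * q ^ (p - 1) - q ^ p)) :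
    StrictAntiOn f (Set.Ioo (0 : ℝ) 1) ∧
    ∀ q ∈ Set.Ioo (0 : ℝ) 1, deriv f q ≠ 0 := by
  have hf' : f = _ := funext hf
  have hderiv (q : ℝ) (hq : q ∈ Set.Ioo (0 : ℝ) 1) : ∃ f', HasDerivAt f f' q ∧ f' < 0 :=
    ⟨_, hf' ▸ hasDerivAt_free_energy p β E hq.1 hq.2,
      free_energy_deriv_neg (by omega) hβ (hEinf ▸ hE) hq.1 hq.2⟩
  have hderiv_neg (q : ℝ) (hq : q ∈ Set.Ioo (0 : ℝ) 1) : deriv f q < 0 := by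
    obtain ⟨f', hf'q, hneg⟩ := hderiv q hq
    rwa [hf'q.deriv]
  refine ⟨strictAntiOn_of_deriv_neg (convex_Ioo 0 1) (fun q hq => ?_) (by simpa using hderiv_neg),
    fun q hq => (hderiv_neg q hq).ne⟩
  obtain ⟨f', hf'q, -⟩ := hderiv q hq
  exact hf'q.continuousAt.continuousWithinAt
end

section
/- Let p ≥ 3, β > 0 and let q ∈ (0,1), E ∈ ℝ satisfy ∂_q f(E,q) = 0, where f(E,q) = β q^{p/2}E + (1/2)log(1−q) + (β²/2)(1 − p(1−q)q^{p−1} − q^p). Then the second derivative factors as ∂²_q f(E,q) = (p / (4 q (1−q)²)) · (q − (p−2)/p) · (2 β₂(q)² − 1), where β₂(q) = β sqrt(p(p−1)/2)(1−q)q^{(p−2)/2}. -/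
/-! The derivative `∂_q f` is affine in `E`, and the `E`-coefficient of `∂²_q f` is
`(p - 2) / (2q)` times that of `∂_q f`. Hence `∂²_q f - (p - 2) / (2q) · ∂_q f` does not depend
on `E`, and a direct computation identifies it with the claimed product at every `q ∈ (0, 1)`;
at a critical point the first derivative drops out. Working with a real exponent `r` in place
of `p` lets all powers be differentiated uniformly by the `rpow` rules. -/

open Real Set Filter Topology

noncomputable section

namespace SphericalPSpin

def freeEnergy (β E r q : ℝ) : ℝ :=
  β * q ^ (r / 2) * E + 1 / 2 * log (1 - q) + β ^ 2 / 2 * (1 - r * (1 - q) * q ^ (r - 1) - q ^ r)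

def freeEnergyDeriv (β E r q : ℝ) : ℝ :=
  β * E * (r / 2) * q ^ (r / 2 - 1) - 1 / (2 * (1 - q))
    - β ^ 2 / 2 * (r * (r - 1)) * ((1 - q) * q ^ (r - 2))

def beta2 (β r q : ℝ) : ℝ :=
  β * √(r * (r - 1) / 2) * (1 - q) * q ^ ((r - 2) / 2)

variable {β E r q : ℝ}

theorem hasDerivAt_freeEnergy (hq : q ∈ Ioo 0 1) :
    HasDerivAt (freeEnergy β E r) (freeEnergyDeriv β E r q) q := by
  obtain ⟨hq0, hq1⟩ := hq
  have hsub := (hasDerivAt_id' q).const_sub (1 : ℝ)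
  have hA := ((hasDerivAt_rpow_const (p := r / 2) (Or.inl hq0.ne')).const_mul β).mul_const E
  have hB := (hsub.log (by linarith)).const_mul (1 / 2)
  have hprod := (hsub.const_mul r).fun_mul (hasDerivAt_rpow_const (p := r - 1) (Or.inl hq0.ne'))
  have hpow := hasDerivAt_rpow_const (p := r) (Or.inl hq0.ne')
  have hC := ((hprod.const_sub 1).fun_sub hpow).const_mul (β ^ 2 / 2)
  refine ((hA.fun_add hB).fun_add hC).congr_deriv ?_
  rw [freeEnergyDeriv, show r - 1 - 1 = r - 2 by ring]
  field_simp
  ring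

theorem hasDerivAt_freeEnergyDeriv (hq : q ∈ Ioo 0 1) :
    HasDerivAt (freeEnergyDeriv β E r)
      (β * E * (r / 2) * ((r / 2 - 1) * q ^ (r / 2 - 2)) - 1 / (2 * (1 - q) ^ 2)
        - β ^ 2 / 2 * (r * (r - 1)) * (-q ^ (r - 2) + (1 - q) * ((r - 2) * q ^ (r - 3)))) q := by
  obtain ⟨hq0, hq1⟩ := hq
  have hsub := (hasDerivAt_id' q).const_sub (1 : ℝ)
  have hA := (hasDerivAt_rpow_const (p := r / 2 - 1) (Or.inl hq0.ne')).const_mul (β * E * (r / 2))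
  have hB := (hasDerivAt_const q (1 : ℝ)).fun_div (hsub.const_mul 2) (by linarith)
  have hC := (hsub.fun_mul (hasDerivAt_rpow_const (p := r - 2) (Or.inl hq0.ne'))).const_mul
    (β ^ 2 / 2 * (r * (r - 1)))
  refine ((hA.fun_sub hB).fun_sub hC).congr_deriv ?_
  rw [show r / 2 - 1 - 1 = r / 2 - 2 by ring, show r - 2 - 1 = r - 3 by ring]
  field_simp
  ring

theorem beta2_sq (hr : 1 ≤ r) (hq : 0 ≤ q) :
    beta2 β r q ^ 2 = β ^ 2 * (r * (r - 1) / 2) * (1 - q) ^ 2 * q ^ (r - 2) := by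
  have hsqrt : √(r * (r - 1) / 2) ^ 2 = r * (r - 1) / 2 := sq_sqrt (by nlinarith)
  have hpow : (q ^ ((r - 2) / 2)) ^ 2 = q ^ (r - 2) := by
    rw [← rpow_mul_natCast hq]
    norm_num
  rw [beta2, mul_pow, mul_pow, mul_pow, hsqrt, hpow]

theorem deriv_freeEnergy_eventuallyEq (hq : q ∈ Ioo 0 1) :
    deriv (freeEnergy β E r) =ᶠ[𝓝 q] freeEnergyDeriv β E r := by
  filter_upwards [isOpen_Ioo.mem_nhds hq] with x hx using (hasDerivAt_freeEnergy hx).deriv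

theorem deriv_deriv_freeEnergy (hr : 1 ≤ r) (hq : q ∈ Ioo 0 1) :
    deriv (deriv (freeEnergy β E r)) q
      = (r - 2) / (2 * q) * deriv (freeEnergy β E r) q
        + r / (4 * q * (1 - q) ^ 2) * (q - (r - 2) / r) * (2 * beta2 β r q ^ 2 - 1) := by
  obtain ⟨hq0, hq1⟩ := hq
  rw [(deriv_freeEnergy_eventuallyEq ⟨hq0, hq1⟩).deriv_eq,
    (hasDerivAt_freeEnergyDeriv ⟨hq0, hq1⟩).deriv, (hasDerivAt_freeEnergy ⟨hq0, hq1⟩).deriv,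
    beta2_sq hr hq0.le, freeEnergyDeriv,
    show r / 2 - 2 = r / 2 - 1 - 1 by ring, show r - 3 = r - 2 - 1 by ring,
    rpow_sub_one hq0.ne' (r / 2 - 1), rpow_sub_one hq0.ne' (r - 2)]
  have h1q : 1 - q ≠ 0 := by linarith
  have hr0 : r ≠ 0 := by linarith
  field_simp
  ring

end SphericalPSpin

end

theorem stmt_11_general (p : ℕ) (hp : 3 ≤ p) (β E : ℝ)
    (f : ℝ → ℝ)
    (hf : ∀ q, f q = β * q ^ ((p : ℝ) / 2) * E + (1 / 2) * Real.log (1 - q)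
        + β ^ 2 / 2 * (1 - (p : ℝ) * (1 - q) * q ^ (p - 1) - q ^ p))
    (β₂ : ℝ → ℝ)
    (hβ₂ : ∀ q, β₂ q = β * Real.sqrt ((p : ℝ) * ((p : ℝ) - 1) / 2) * (1 - q)
        * q ^ (((p : ℝ) - 2) / 2))
    (q : ℝ) (hq : q ∈ Set.Ioo (0 : ℝ) 1)
    (hcrit : deriv f q = 0) :
    deriv (deriv f) q
      = (p : ℝ) / (4 * q * (1 - q) ^ 2) * (q - ((p : ℝ) - 2) / p)
        * (2 * (β₂ q) ^ 2 - 1) := by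
  have hf_eq : f = SphericalPSpin.freeEnergy β E p := funext fun y => by
    rw [hf, SphericalPSpin.freeEnergy, ← Real.rpow_natCast y p, ← Real.rpow_natCast y (p - 1),
      Nat.cast_sub (by omega), Nat.cast_one]
  have hβ₂_eq : β₂ q = SphericalPSpin.beta2 β p q := hβ₂ q
  have hp_one : (1 : ℝ) ≤ p := Nat.one_le_cast.mpr (by omega)
  subst hf_eq
  rw [SphericalPSpin.deriv_deriv_freeEnergy hp_one hq, hcrit, hβ₂_eq, mul_zero, zero_add]

theorem stmt_11 (p : ℕ) (hp : 3 ≤ p) (β E : ℝ) (hβ : 0 < β)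
    (f : ℝ → ℝ)
    (hf : ∀ q, f q = β * q ^ ((p : ℝ) / 2) * E + (1 / 2) * Real.log (1 - q)
        + β ^ 2 / 2 * (1 - (p : ℝ) * (1 - q) * q ^ (p - 1) - q ^ p))
    (β₂ : ℝ → ℝ)
    (hβ₂ : ∀ q, β₂ q = β * Real.sqrt ((p : ℝ) * ((p : ℝ) - 1) / 2) * (1 - q)
        * q ^ (((p : ℝ) - 2) / 2))
    (q : ℝ) (hq : q ∈ Set.Ioo (0 : ℝ) 1)
    (hcrit : deriv f q = 0) :
    deriv (deriv f) q
      = (p : ℝ) / (4 * q * (1 - q) ^ 2) * (q - ((p : ℝ) - 2) / p)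
        * (2 * (β₂ q) ^ 2 - 1) :=
  stmt_11_general p hp β E f hf β₂ hβ₂ q hq hcrit
end

section
/- Let p ≥ 3 and define φ(r) = −(1/2)log(1+r) + (2/p)r − r/(2(p−1)) − r²/(2p(p−1)) − (p−2)/p + (1/2)log(p−1) for r ≥ p−2. Then φ(p−2) = 0, φ'(p−2) = 0, φ''(r) < 0 for all r ≥ p−2, and consequently φ(r) ≤ 0 for all r ≥ p−2 with equality only at r = p−2. -/
/-!
The value and the first derivative of `φ` vanish at `r = p - 2` by direct computation, and
`φ''(r) = 1 / (2 (1 + r)²) - 1 / (p (p - 1))` is negative as soon as `2 (1 + r)² > p (p - 1)`,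
which holds for `1 + r ≥ p - 1` because `2 (p - 1) > p`. Hence `φ'` decreases strictly from `0`
on `[p - 2, ∞)`, so `φ` decreases strictly from `0` there.
-/

open Set

namespace LogQuadratic

noncomputable def phi (P r : ℝ) : ℝ :=
  -(1 / 2) * Real.log (1 + r) + (2 / P) * r - r / (2 * (P - 1)) - r ^ 2 / (2 * P * (P - 1))
    - (P - 2) / P + (1 / 2) * Real.log (P - 1)

noncomputable def phiDeriv (P r : ℝ) : ℝ :=
  -(1 / 2) * (1 + r)⁻¹ + 2 / P - 1 / (2 * (P - 1)) - r / (P * (P - 1))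

noncomputable def phiDeriv2 (P r : ℝ) : ℝ :=
  1 / (2 * (1 + r) ^ 2) - 1 / (P * (P - 1))

variable {P r : ℝ}

lemma hasDerivAt_phi (hr : r ≠ -1) : HasDerivAt (phi P) (phiDeriv P r) r := by
  have h1r : 1 + r ≠ 0 := fun h => hr (by linarith)
  have hlog : HasDerivAt (fun x : ℝ => Real.log (1 + x)) (1 + r)⁻¹ r := by
    simpa using ((hasDerivAt_id r).const_add 1).log h1r
  have H := ((((hlog.const_mul (-(1 / 2))).add ((hasDerivAt_id r).const_mul (2 / P))).sub
    ((hasDerivAt_id r).div_const (2 * (P - 1)))).sub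
    ((hasDerivAt_pow 2 r).div_const (2 * P * (P - 1)))).sub_const ((P - 2) / P)
  refine (H.add_const ((1 / 2) * Real.log (P - 1))).congr_deriv ?_
  simp only [phiDeriv]
  field_simp
  ring

lemma hasDerivAt_phiDeriv (hr : r ≠ -1) : HasDerivAt (phiDeriv P) (phiDeriv2 P r) r := by
  have h1r : 1 + r ≠ 0 := fun h => hr (by linarith)
  have hinv : HasDerivAt (fun x : ℝ => (1 + x)⁻¹) (-1 / (1 + r) ^ 2) r := by
    simpa [Pi.inv_def] using ((hasDerivAt_id r).const_add 1).inv h1r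
  have H := (((hinv.const_mul (-(1 / 2))).add_const (2 / P)).sub_const (1 / (2 * (P - 1)))).sub
    ((hasDerivAt_id r).div_const (P * (P - 1)))
  refine H.congr_deriv ?_
  simp only [phiDeriv2]
  field_simp

lemma deriv_phi (hr : r ≠ -1) : deriv (phi P) r = phiDeriv P r :=
  (hasDerivAt_phi hr).deriv

lemma deriv_deriv_phi (hr : r ≠ -1) : deriv (deriv (phi P)) r = phiDeriv2 P r := by
  have hev : deriv (phi P) =ᶠ[nhds r] phiDeriv P := by
    filter_upwards [eventually_ne_nhds hr] with x hx using deriv_phi hx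
  rw [hev.deriv_eq, (hasDerivAt_phiDeriv hr).deriv]

lemma phi_sub_two (hP₀ : P ≠ 0) (hP₁ : P - 1 ≠ 0) : phi P (P - 2) = 0 := by
  rw [phi, show 1 + (P - 2) = P - 1 by ring]
  field_simp
  ring

lemma phiDeriv_sub_two (hP₀ : P ≠ 0) (hP₁ : P - 1 ≠ 0) : phiDeriv P (P - 2) = 0 := by
  rw [phiDeriv, show 1 + (P - 2) = P - 1 by ring]
  field_simp
  ring

lemma phiDeriv2_neg (hP : 2 < P) (hr : P - 2 ≤ r) : phiDeriv2 P r < 0 := by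
  have hP1 : P - 1 ≤ 1 + r := by linarith
  have hsq : (P - 1) ^ 2 ≤ (1 + r) ^ 2 := pow_le_pow_left₀ (by linarith) hP1 2
  have hlt : 1 / (2 * (1 + r) ^ 2) < 1 / (P * (P - 1)) :=
    one_div_lt_one_div_of_lt (by nlinarith) (by nlinarith)
  rw [phiDeriv2]
  linarith

lemma ne_neg_one_of_sub_two_le (hP : 2 < P) (hr : P - 2 ≤ r) : r ≠ -1 := by
  linarith

lemma phiDeriv_strictAntiOn (hP : 2 < P) : StrictAntiOn (phiDeriv P) (Ici (P - 2)) := by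
  have hderiv : ∀ x ∈ Ici (P - 2), HasDerivAt (phiDeriv P) (phiDeriv2 P x) x :=
    fun x hx => hasDerivAt_phiDeriv (ne_neg_one_of_sub_two_le hP hx)
  refine strictAntiOn_of_hasDerivWithinAt_neg (f' := phiDeriv2 P) (convex_Ici _)
    (fun x hx => (hderiv x hx).continuousAt.continuousWithinAt) (fun x hx => ?_) (fun x hx => ?_)
  all_goals rw [interior_Ici, mem_Ioi] at hx
  exacts [(hderiv x hx.le).hasDerivWithinAt, phiDeriv2_neg hP hx.le]

lemma phiDeriv_neg (hP : 2 < P) (hr : P - 2 < r) : phiDeriv P r < 0 := by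
  rw [← phiDeriv_sub_two (P := P) (by linarith) (by linarith)]
  exact phiDeriv_strictAntiOn hP self_mem_Ici hr.le hr

lemma phi_strictAntiOn (hP : 2 < P) : StrictAntiOn (phi P) (Ici (P - 2)) := by
  have hderiv : ∀ x ∈ Ici (P - 2), HasDerivAt (phi P) (phiDeriv P x) x :=
    fun x hx => hasDerivAt_phi (ne_neg_one_of_sub_two_le hP hx)
  refine strictAntiOn_of_hasDerivWithinAt_neg (f' := phiDeriv P) (convex_Ici _)
    (fun x hx => (hderiv x hx).continuousAt.continuousWithinAt) (fun x hx => ?_) (fun x hx => ?_)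
  all_goals rw [interior_Ici, mem_Ioi] at hx
  exacts [(hderiv x hx.le).hasDerivWithinAt, phiDeriv_neg hP hx]

lemma phi_neg (hP : 2 < P) (hr : P - 2 < r) : phi P r < 0 := by
  rw [← phi_sub_two (P := P) (by linarith) (by linarith)]
  exact phi_strictAntiOn hP self_mem_Ici hr.le hr

end LogQuadratic

open LogQuadratic in
theorem stmt_18 (p : ℕ) (hp : 3 ≤ p)
    (φ : ℝ → ℝ)
    (hφ : ∀ r, φ r = -(1 / 2) * Real.log (1 + r) + (2 / p) * r
        - r / (2 * ((p : ℝ) - 1)) - r ^ 2 / (2 * (p : ℝ) * ((p : ℝ) - 1))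
        - ((p : ℝ) - 2) / p + (1 / 2) * Real.log ((p : ℝ) - 1)) :
    φ ((p : ℝ) - 2) = 0 ∧
    deriv φ ((p : ℝ) - 2) = 0 ∧
    (∀ r : ℝ, (p : ℝ) - 2 ≤ r → deriv (deriv φ) r < 0) ∧
    (∀ r : ℝ, (p : ℝ) - 2 ≤ r → φ r ≤ 0 ∧ (φ r = 0 → r = (p : ℝ) - 2)) := by
  obtain rfl : φ = phi p := funext hφ
  have hP : (2 : ℝ) < p := by exact_mod_cast hp
  have hP₀ : (p : ℝ) ≠ 0 := by linarith
  have hP₁ : (p : ℝ) - 1 ≠ 0 := by linarith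
  refine ⟨phi_sub_two hP₀ hP₁, ?_, fun r hr => ?_, fun r hr => ?_⟩
  · rw [deriv_phi (ne_neg_one_of_sub_two_le hP le_rfl), phiDeriv_sub_two hP₀ hP₁]
  · rw [deriv_deriv_phi (ne_neg_one_of_sub_two_le hP hr)]
    exact phiDeriv2_neg hP hr
  · rcases hr.eq_or_lt with rfl | hlt
    · exact ⟨(phi_sub_two hP₀ hP₁).le, fun _ => rfl⟩
    · exact ⟨(phi_neg hP hlt).le, fun h => absurd h (phi_neg hP hlt).ne⟩
end

section
/- Let p ≥ 3 and β > β_d = sqrt((p−1)^{p−1}/(p(p−2)^{p−2})). The equation (1−q)q^{p−2} = 1/(pβ²) has exactly two solutions in (0,1), one in (0,(p−2)/(p−1)) and one in ((p−2)/(p−1),1); moreover this equation is equivalent to 2β₂(q)² = (p−1)(1−q), where β₂(q) = β sqrt(p(p−1)/2)(1−q)q^{(p−2)/2}, and the solution in ((p−2)/(p−1),1) is strictly increasing as a function of β. -/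
/-!
The function `g(q) = (1 - q) q^(p-2)` vanishes at `0` and `1`, increases on
`[0, (p-2)/(p-1)]` and decreases on `[(p-2)/(p-1), 1]`, with maximum
`(p-2)^(p-2) / (p-1)^(p-1) = 1 / (p β_d²)`. For `β > β_d` the level `1 / (p β²)` lies strictly
between `0` and this maximum, so it is attained exactly once on each side of the peak; increasing
`β` lowers the level, which moves the solution on the decreasing branch to the right. The
reformulation is algebra: `2 β₂(q)² = p (p-1) β² (1-q)² q^(p-2)`.
-/

open Set

theorem exists_eq_pair_of_strictMonoOn_of_strictAntiOn {f : ℝ → ℝ} {a c b t : ℝ}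
    (hac : a ≤ c) (hcb : c ≤ b) (hf : ContinuousOn f (Icc a b))
    (hmono : StrictMonoOn f (Icc a c)) (hanti : StrictAntiOn f (Icc c b))
    (hfa : f a < t) (hfb : f b < t) (htc : t < f c) :
    ∃ q₁ ∈ Ioo a c, ∃ q₂ ∈ Ioo c b, {q ∈ Ioo a b | f q = t} = {q₁, q₂} := by
  obtain ⟨q₁, hq₁, hfq₁⟩ :=
    intermediate_value_Ioo hac (hf.mono (Icc_subset_Icc_right hcb)) ⟨hfa, htc⟩
  obtain ⟨q₂, hq₂, hfq₂⟩ :=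
    intermediate_value_Ioo' hcb (hf.mono (Icc_subset_Icc_left hac)) ⟨hfb, htc⟩
  refine ⟨q₁, hq₁, q₂, hq₂, Set.ext fun q => ⟨?_, ?_⟩⟩
  · rintro ⟨⟨haq, hqb⟩, hfq⟩
    rcases le_or_gt q c with hqc | hcq
    · exact Or.inl <| hmono.injOn ⟨haq.le, hqc⟩ (Ioo_subset_Icc_self hq₁) (hfq.trans hfq₁.symm)
    · exact Or.inr <| hanti.injOn ⟨hcq.le, hqb.le⟩ (Ioo_subset_Icc_self hq₂) (hfq.trans hfq₂.symm)
  · rintro (rfl | rfl)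
    · exact ⟨⟨hq₁.1, hq₁.2.trans_le hcb⟩, hfq₁⟩
    · exact ⟨⟨hac.trans_lt hq₂.1, hq₂.2⟩, hfq₂⟩

section OneSubMulPow

variable (n : ℕ)

theorem hasDerivAt_one_sub_mul_pow_succ (q : ℝ) :
    HasDerivAt (fun q : ℝ => (1 - q) * q ^ (n + 1)) (q ^ n * ((n + 1) - (n + 2) * q)) q := by
  have h : HasDerivAt (fun q : ℝ => (1 - q) * q ^ (n + 1)) _ q :=
    ((hasDerivAt_id' q).const_sub 1).mul (hasDerivAt_pow (n + 1) q)
  convert h using 1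
  push_cast
  ring

theorem strictMonoOn_one_sub_mul_pow_succ :
    StrictMonoOn (fun q : ℝ => (1 - q) * q ^ (n + 1)) (Icc 0 ((n + 1) / (n + 2))) := by
  refine strictMonoOn_of_deriv_pos (convex_Icc _ _) (by fun_prop) fun q hq => ?_
  rw [interior_Icc] at hq
  rw [(hasDerivAt_one_sub_mul_pow_succ n q).deriv]
  have hq' : q * (n + 2) < n + 1 := (lt_div_iff₀ (by positivity)).mp hq.2
  exact mul_pos (pow_pos hq.1 n) (by linarith)

theorem strictAntiOn_one_sub_mul_pow_succ :
    StrictAntiOn (fun q : ℝ => (1 - q) * q ^ (n + 1)) (Icc ((n + 1) / (n + 2)) 1) := by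
  refine strictAntiOn_of_deriv_neg (convex_Icc _ _) (by fun_prop) fun q hq => ?_
  rw [interior_Icc] at hq
  rw [(hasDerivAt_one_sub_mul_pow_succ n q).deriv]
  have hq' : (n + 1 : ℝ) < q * (n + 2) := (div_lt_iff₀ (by positivity)).mp hq.1
  exact mul_neg_of_pos_of_neg (pow_pos ((by positivity : (0 : ℝ) < _).trans hq.1) n) (by linarith)

theorem one_sub_mul_pow_succ_at_max :
    (1 - (n + 1) / (n + 2)) * ((n + 1) / (n + 2) : ℝ) ^ (n + 1)
      = (n + 1) ^ (n + 1) / (n + 2) ^ (n + 2) := by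
  rw [div_pow]
  field_simp
  ring

theorem exists_one_sub_mul_pow_succ_eq_pair {t : ℝ} (ht : 0 < t)
    (ht' : t < (n + 1) ^ (n + 1) / (n + 2) ^ (n + 2)) :
    ∃ q₁ ∈ Ioo 0 ((n + 1) / (n + 2) : ℝ), ∃ q₂ ∈ Ioo ((n + 1) / (n + 2) : ℝ) 1,
      {q ∈ Ioo 0 1 | (1 - q) * q ^ (n + 1) = t} = {q₁, q₂} := by
  have hc : (n + 1) / (n + 2) < (1 : ℝ) := (div_lt_one (by positivity)).mpr (by linarith)
  refine exists_eq_pair_of_strictMonoOn_of_strictAntiOn (by positivity) hc.le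
    (by fun_prop) (strictMonoOn_one_sub_mul_pow_succ n) (strictAntiOn_one_sub_mul_pow_succ n)
    (by simpa using ht) (by simpa using ht) ?_
  rwa [one_sub_mul_pow_succ_at_max]

end OneSubMulPow

theorem one_div_mul_sq_lt_one_div_mul_sq {a b b' : ℝ} (ha : 0 < a) (hb : 0 < b) (hbb' : b < b') :
    1 / (a * b' ^ 2) < 1 / (a * b ^ 2) :=
  one_div_lt_one_div_of_lt (by positivity) <|
    mul_lt_mul_of_pos_left (pow_lt_pow_left₀ hbb' hb.le two_ne_zero) ha

theorem one_sub_mul_rpow_eq_iff {p k β q : ℝ} (hp : 1 < p) (hβ : β ≠ 0) (hq : q ∈ Ioo 0 1) :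
    (1 - q) * q ^ k = 1 / (p * β ^ 2) ↔
      2 * (β * √(p * (p - 1) / 2) * (1 - q) * q ^ (k / 2)) ^ 2 = (p - 1) * (1 - q) := by
  have hsqrt : √(p * (p - 1) / 2) ^ 2 = p * (p - 1) / 2 := Real.sq_sqrt (by nlinarith)
  have hhalf : (q ^ (k / 2)) ^ 2 = q ^ k := by
    rw [← Real.rpow_mul_natCast hq.1.le]; ring_nf
  have hfactor : (p - 1) * (1 - q) ≠ 0 := mul_ne_zero (by linarith) (by linarith [hq.2])
  rw [mul_pow, mul_pow, mul_pow, hsqrt, hhalf, eq_div_iff (by positivity)]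
  constructor
  · intro h; linear_combination (p - 1) * (1 - q) * h
  · intro h
    apply mul_left_cancel₀ hfactor
    linear_combination h

theorem stmt_19 (p : ℕ) (hp : 3 ≤ p)
    (βd : ℝ)
    (hβd : βd = Real.sqrt (((p : ℝ) - 1) ^ (p - 1) / ((p : ℝ) * ((p : ℝ) - 2) ^ (p - 2)))) :
    (∀ β : ℝ, βd < β →
      (∃ q₁ ∈ Set.Ioo (0 : ℝ) (((p : ℝ) - 2) / ((p : ℝ) - 1)),
        ∃ q₂ ∈ Set.Ioo (((p : ℝ) - 2) / ((p : ℝ) - 1)) 1,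
          {q ∈ Set.Ioo (0 : ℝ) 1 | (1 - q) * q ^ (p - 2) = 1 / ((p : ℝ) * β ^ 2)}
            = {q₁, q₂}) ∧
      (∀ q ∈ Set.Ioo (0 : ℝ) 1,
        ((1 - q) * q ^ (p - 2) = 1 / ((p : ℝ) * β ^ 2) ↔
          2 * (β * Real.sqrt ((p : ℝ) * ((p : ℝ) - 1) / 2) * (1 - q)
              * q ^ (((p : ℝ) - 2) / 2)) ^ 2 = ((p : ℝ) - 1) * (1 - q)))) ∧
    (∀ β β' : ℝ, βd < β → β < β' →
      ∀ q q' : ℝ, q ∈ Set.Ioo (((p : ℝ) - 2) / ((p : ℝ) - 1)) 1 →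
        q' ∈ Set.Ioo (((p : ℝ) - 2) / ((p : ℝ) - 1)) 1 →
        (1 - q) * q ^ (p - 2) = 1 / ((p : ℝ) * β ^ 2) →
        (1 - q') * q' ^ (p - 2) = 1 / ((p : ℝ) * β' ^ 2) →
        q < q') := by
  obtain ⟨n, rfl⟩ : ∃ n, p = n + 3 := ⟨p - 3, by omega⟩
  simp only [show n + 3 - 2 = n + 1 by omega, show n + 3 - 1 = n + 2 by omega] at hβd ⊢
  push_cast at hβd ⊢
  rw [show (n : ℝ) + 3 - 2 = n + 1 by ring, show (n : ℝ) + 3 - 1 = n + 2 by ring] at hβd ⊢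
  have hβd_pos : 0 < βd := by rw [hβd]; positivity
  have hmax : 1 / ((n + 3) * βd ^ 2) = (n + 1) ^ (n + 1) / (n + 2) ^ (n + 2) := by
    rw [hβd, Real.sq_sqrt (by positivity)]
    field_simp
  refine ⟨fun β hβ => ⟨?_, fun q hq => ?_⟩, fun β β' hβ hβ' q q' hq hq' he he' => ?_⟩
  · refine exists_one_sub_mul_pow_succ_eq_pair n (by positivity [hβd_pos.trans hβ]) ?_
    rw [← hmax]
    exact one_div_mul_sq_lt_one_div_mul_sq (by positivity) hβd_pos hβ
  · have h := one_sub_mul_rpow_eq_iff (p := n + 3) (k := n + 1) (by linarith)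
      (hβd_pos.trans hβ).ne' hq
    rw [show (n : ℝ) + 3 - 1 = n + 2 by ring] at h
    exact_mod_cast h
  · refine (StrictAntiOn.lt_iff_gt (strictAntiOn_one_sub_mul_pow_succ n)
      (Ioo_subset_Icc_self hq') (Ioo_subset_Icc_self hq)).1 ?_
    simp only [he, he']
    exact one_div_mul_sq_lt_one_div_mul_sq (by positivity) (hβd_pos.trans hβ) hβ'
end
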